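/- arXiv:2406.15180 — 3 statements merged into one kernel-verified Lean document; each statement's English description precedes it below -/
import Mathlib

section
/- Let n ≥ 1 and 1 ≤ k ≤ n, and let G(t) = max{0, t − 1/k}. Then for all x ∈ ℝⁿ with nonnegative coordinates, ‖x‖_G ≤ ‖x‖_{Top-k} ≤ 2·‖x‖_G, where ‖·‖_G is the Orlicz norm generated by G. In particular, the Top-k norm is 2-approximated by an Orlicz norm. -/
noncomputable section

/-- The Orlicz norm generated by `G`: `inf {α > 0 : ∑ᵢ G (xᵢ/α) ≤ 1}`. -/
def orliczNorm {n : ℕ} (G : ℝ → ℝ) (x : Fin n → ℝ) : ℝ :=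
  sInf {α : ℝ | 0 < α ∧ ∑ i, G (x i / α) ≤ 1}

/-- The Top-k norm: the maximum, over subsets `S` of size `k`, of `∑_{i ∈ S} x i`. -/
def topkNorm {n : ℕ} (k : ℕ) (x : Fin n → ℝ) : ℝ :=
  ⨆ S : {S : Finset (Fin n) // S.card = k}, ∑ i ∈ (S : Finset (Fin n)), x i

/-- The Top-k norm is `2`-approximated by the Orlicz norm generated by
`G(t) = max{0, t − 1/k}`: for every nonnegative `x`,
`‖x‖_G ≤ ‖x‖_{Top-k} ≤ 2·‖x‖_G`. -/
theorem topkNorm_orlicz_approx (n k : ℕ) (hn : 1 ≤ n) (hk1 : 1 ≤ k) (hkn : k ≤ n) :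
    ∀ x : Fin n → ℝ, 0 ≤ x →
      orliczNorm (fun t => max 0 (t - 1 / (k : ℝ))) x ≤ topkNorm k x ∧
      topkNorm k x ≤ 2 * orliczNorm (fun t => max 0 (t - 1 / (k : ℝ))) x := by
  intro x hx
  have hx' : ∀ i, 0 ≤ x i := fun i => hx i
  have hk0 : (0:ℝ) < k := by exact_mod_cast hk1
  set G : ℝ → ℝ := fun t => max 0 (t - 1 / (k : ℝ)) with hG
  set O : Set ℝ := {α : ℝ | 0 < α ∧ ∑ i, G (x i / α) ≤ 1} with hO
  set T : ℝ := topkNorm k x with hT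
  -- a set of cardinality k exists
  obtain ⟨C₀, hC₀sub, hC₀card⟩ := Finset.exists_subset_card_eq (s := (Finset.univ : Finset (Fin n))) (n := k) (by simpa using hkn)
  haveI : Nonempty {S : Finset (Fin n) // S.card = k} := ⟨⟨C₀, hC₀card⟩⟩
  have hbdd : BddAbove (Set.range fun S : {S : Finset (Fin n) // S.card = k} =>
      ∑ i ∈ (S : Finset (Fin n)), x i) := Set.Finite.bddAbove (Set.finite_range _)
  have hTge : ∀ S : Finset (Fin n), S.card = k → ∑ i ∈ S, x i ≤ T := fun S hS =>
    le_ciSup hbdd ⟨S, hS⟩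
  have hT0 : 0 ≤ T :=
    le_trans (Finset.sum_nonneg fun i _ => hx' i) (hTge C₀ hC₀card)
  -- G is nonneg and G t ≤ t for t ≥ 0
  have hGnonneg : ∀ t, 0 ≤ G t := fun t => le_max_left _ _
  have hGle : ∀ t, 0 ≤ t → G t ≤ t := fun t ht => max_le ht (by
    have : (0:ℝ) ≤ 1 / k := by positivity
    linarith)
  -- O is nonempty
  have hOne : O.Nonempty := by
    refine ⟨(k:ℝ) * (∑ i, x i) + 1, ?_, ?_⟩
    · have : (0:ℝ) ≤ ∑ i, x i := Finset.sum_nonneg fun i _ => hx' i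
      positivity
    · have hsum : (0:ℝ) ≤ ∑ i, x i := Finset.sum_nonneg fun i _ => hx' i
      have : ∀ i ∈ Finset.univ, G (x i / ((k:ℝ) * (∑ i, x i) + 1)) = 0 := by
        intro i _
        have hα : (0:ℝ) < (k:ℝ) * (∑ i, x i) + 1 := by positivity
        have hxi : x i ≤ ∑ j, x j :=
          Finset.single_le_sum (fun j _ => hx' j) (Finset.mem_univ i)
        have h1 : x i / ((k:ℝ) * (∑ i, x i) + 1) ≤ 1 / k := by
          rw [div_le_div_iff₀ hα hk0]
          nlinarith
        simp only [hG, max_eq_left]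
        exact max_eq_left (by linarith)
      rw [Finset.sum_congr rfl this]
      simp
  have hObdd : BddBelow O := ⟨0, fun a ha => ha.1.le⟩
  -- Part 1: orliczNorm ≤ T
  have part1 : sInf O ≤ T := by
    refine le_of_forall_pos_le_add fun ε hε => ?_
    refine csInf_le hObdd ?_
    set α : ℝ := T + ε with hα
    have hα0 : 0 < α := by linarith
    have hTα : T < α := by linarith
    refine ⟨hα0, ?_⟩
    classical
    set A : Finset (Fin n) := Finset.univ.filter (fun i => 1 / (k:ℝ) < x i / α) with hA
    have hAcard : A.card ≤ k := by
      by_contra h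
      push_neg at h
      obtain ⟨B, hBA, hBcard⟩ := Finset.exists_subset_card_eq h.le
      have hBsum : α < ∑ i ∈ B, x i := by
        have h1 : ∑ _i ∈ B, α / (k:ℝ) < ∑ i ∈ B, x i := by
          refine Finset.sum_lt_sum_of_nonempty ?_ ?_
          · rw [← Finset.card_pos, hBcard]; omega
          · intro i hi
            have : 1 / (k:ℝ) < x i / α := (Finset.mem_filter.mp (hBA hi)).2
            rw [div_lt_div_iff₀ hk0 hα0] at this
            rw [div_lt_iff₀ hk0]
            linarith
        rw [Finset.sum_const, hBcard, nsmul_eq_mul] at h1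
        have : (k:ℝ) * (α / k) = α := by field_simp
        linarith
      have := hTge B hBcard
      linarith
    obtain ⟨C, hAC, _, hCcard⟩ := Finset.exists_subsuperset_card_eq (A.subset_univ)
      hAcard (by simpa using hkn)
    have hzero : ∀ i ∈ Finset.univ, i ∉ C → G (x i / α) = 0 := by
      intro i _ hiC
      have hiA : i ∉ A := fun h => hiC (hAC h)
      rw [hA, Finset.mem_filter] at hiA
      push_neg at hiA
      have := hiA (Finset.mem_univ i)
      exact max_eq_left (by linarith)
    calc ∑ i, G (x i / α) = ∑ i ∈ C, G (x i / α) :=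
          (Finset.sum_subset (C.subset_univ) hzero).symm
      _ ≤ ∑ i ∈ C, x i / α :=
          Finset.sum_le_sum fun i _ => hGle _ (div_nonneg (hx' i) hα0.le)
      _ = (∑ i ∈ C, x i) / α := by rw [Finset.sum_div]
      _ ≤ T / α := by
          gcongr
          exact hTge C hCcard
      _ ≤ 1 := by rw [div_le_one hα0]; linarith
  -- Part 2: T ≤ 2 * orliczNorm
  have part2 : T ≤ 2 * sInf O := by
    have h2 : ∀ α ∈ O, T / 2 ≤ α := by
      rintro α ⟨hα0, hαsum⟩
      rw [div_le_iff₀ (by norm_num : (0:ℝ) < 2)]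
      rw [hT, topkNorm]
      refine ciSup_le fun S => ?_
      have hS : (S : Finset (Fin n)).card = k := S.2
      have key : (∑ i ∈ (S : Finset (Fin n)), x i) / α ≤ 2 := by
        rw [Finset.sum_div]
        have h1 : ∀ i ∈ (S : Finset (Fin n)), x i / α ≤ G (x i / α) + 1 / k := by
          intro i _
          have := le_max_right (0:ℝ) (x i / α - 1 / k)
          simp only [hG]
          linarith [le_max_right (0:ℝ) (x i / α - 1 / (k:ℝ))]
        calc ∑ i ∈ (S : Finset (Fin n)), x i / α
            ≤ ∑ i ∈ (S : Finset (Fin n)), (G (x i / α) + 1 / k) :=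
              Finset.sum_le_sum h1
          _ = (∑ i ∈ (S : Finset (Fin n)), G (x i / α)) + (S : Finset (Fin n)).card * (1 / k) := by
              rw [Finset.sum_add_distrib, Finset.sum_const, nsmul_eq_mul]
          _ ≤ 1 + 1 := by
              have hsub : ∑ i ∈ (S : Finset (Fin n)), G (x i / α) ≤ ∑ i, G (x i / α) :=
                Finset.sum_le_sum_of_subset_of_nonneg (Finset.subset_univ _)
                  (fun i _ _ => hGnonneg _)
              have : ((S : Finset (Fin n)).card : ℝ) * (1 / k) = 1 := by
                rw [hS]; field_simp
              linarith
          _ = 2 := by norm_num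
      rw [div_le_iff₀ hα0] at key
      linarith
    have := le_csInf hOne h2
    linarith
  exact ⟨part1, part2⟩
end
end

section
/- For every ε ∈ (0,1) and every constant C > 0 there exist an n ≥ 2 and a monotone symmetric norm N on ℝⁿ such that no Orlicz function G satisfies N(x) ≤ ‖x‖_G ≤ C·(log₂ n)^{1−ε}·N(x) for all x ∈ ℝⁿ with nonnegative coordinates. In other words, symmetric norms cannot in general be (log n)^{1−ε}-approximated by Orlicz norms. -/
noncomputable section

/-- A monotone norm on ℝⁿ: subadditive, absolutely homogeneous, point-separating, and
monotone on the nonnegative orthant. -/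
def IsMonotoneNorm {n : ℕ} (N : (Fin n → ℝ) → ℝ) : Prop :=
  (∀ x y, N (x + y) ≤ N x + N y) ∧
  (∀ (c : ℝ) (x), N (c • x) = |c| * N x) ∧
  (∀ x, N x = 0 → x = 0) ∧
  (∀ x y : Fin n → ℝ, 0 ≤ x → x ≤ y → N x ≤ N y)

/-- A symmetric norm: invariant under permutations of the coordinates. -/
def IsSymmetricNorm {n : ℕ} (N : (Fin n → ℝ) → ℝ) : Prop :=
  ∀ (σ : Equiv.Perm (Fin n)) (x : Fin n → ℝ), N (x ∘ σ) = N x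

/-- An Orlicz function: continuous, convex and nondecreasing on `[0,∞)`, with `G 0 = 0` and
`G(t) → ∞` as `t → ∞`. -/
def IsOrliczFunction (G : ℝ → ℝ) : Prop :=
  ContinuousOn G (Set.Ici 0) ∧ ConvexOn ℝ (Set.Ici 0) G ∧
  MonotoneOn G (Set.Ici 0) ∧ G 0 = 0 ∧
  Filter.Tendsto G Filter.atTop Filter.atTop

/-!
Take `N x = max_S (∑_{i ∈ S} |xᵢ|) / |S|^β` with `β = ε/2`, and suppose `N ≤ ‖·‖_G ≤ K N`.
On the indicator of `k` coordinates `N = k^{1-β}`, so the lower bound forces `G t > 1/k` as soon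
as `t > k^{β-1}`. The vector `zᵢ = (i+1)^{β-1}` has `N z ≤ 1/β`, so the upper bound gives
`∑ G(zᵢ/A) ≤ 1` with `A = K/β + 1`. For an integer `M > A^{1/(1-β)}` we have
`zᵢ/A > (M(i+1))^{β-1}`, hence `G(zᵢ/A) > 1/(M(i+1))` for `i < n/M`, and summing gives
`log(n/M) ≤ H_{n/M} ≤ M`. Thus `log n ≲ A^{1/(1-β)}`, i.e. `K ≳ (log n)^{1-β}`, which fails for
`K = C (log₂ n)^{1-ε}` and `n` large.
-/
open Finset Filter

theorem sum_le_sum_range_card_of_antitone {f : ℕ → ℝ} (hf : Antitone f) (S : Finset ℕ) :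
    ∑ i ∈ S, f i ≤ ∑ i ∈ range #S, f i := by
  induction S using Finset.induction_on_max with
  | empty => simp
  | insert a s ha ih =>
    have has : a ∉ s := fun h => lt_irrefl a (ha a h)
    have hcard : #s ≤ a := by
      simpa using card_le_card (fun x hx => mem_range.2 (ha x hx) : s ⊆ range a)
    rw [sum_insert has, card_insert_of_notMem has, sum_range_succ, add_comm]
    exact add_le_add ih (hf hcard)

theorem mul_rpow_sub_one_le_rpow_sub_rpow {β x : ℝ} (hβ0 : 0 ≤ β) (hβ1 : β ≤ 1) (hx : 1 ≤ x) :
    β * x ^ (β - 1) ≤ x ^ β - (x - 1) ^ β := by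
  have hx0 : 0 < x := by linarith
  have hs : -1 ≤ -x⁻¹ := neg_le_neg (inv_le_one_of_one_le₀ hx)
  have hsplit : (x - 1) ^ β = x ^ β * (1 + -x⁻¹) ^ β := by
    rw [← Real.mul_rpow hx0.le (by linarith)]
    congr 1
    field_simp
    ring
  calc β * x ^ (β - 1) = x ^ β - x ^ β * (1 + β * -x⁻¹) := by
        rw [Real.rpow_sub_one hx0.ne']
        ring
    _ ≤ x ^ β - (x - 1) ^ β := by
        rw [hsplit]
        gcongr
        exact rpow_one_add_le_one_add_mul_self hs hβ0 hβ1

theorem sum_range_rpow_sub_one_le {β : ℝ} (hβ0 : 0 < β) (hβ1 : β ≤ 1) (k : ℕ) :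
    ∑ j ∈ range k, ((j : ℝ) + 1) ^ (β - 1) ≤ (k : ℝ) ^ β / β := by
  rw [le_div_iff₀' hβ0, mul_sum]
  calc ∑ j ∈ range k, β * ((j : ℝ) + 1) ^ (β - 1)
      ≤ ∑ j ∈ range k, (((j + 1 : ℕ) : ℝ) ^ β - (j : ℝ) ^ β) := by
        refine sum_le_sum fun j _ => ?_
        simpa using
          mul_rpow_sub_one_le_rpow_sub_rpow hβ0.le hβ1 (le_add_of_nonneg_left j.cast_nonneg)
    _ = (k : ℝ) ^ β := by
        rw [sum_range_sub (fun j : ℕ => (j : ℝ) ^ β)]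
        simp [Real.zero_rpow hβ0.ne']

section SubsetSumNorm

variable {ι : Type*} [Fintype ι] {β : ℝ}

def subsetSumNorm (β : ℝ) (x : ι → ℝ) : ℝ :=
  univ.powerset.sup' (powerset_nonempty _) fun S => (∑ i ∈ S, |x i|) / (#S : ℝ) ^ β

theorem le_subsetSumNorm (β : ℝ) (x : ι → ℝ) (S : Finset ι) :
    (∑ i ∈ S, |x i|) / (#S : ℝ) ^ β ≤ subsetSumNorm β x :=
  le_sup' (fun S : Finset ι => (∑ i ∈ S, |x i|) / (#S : ℝ) ^ β) (mem_powerset.2 (subset_univ S))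

theorem subsetSumNorm_le {x : ι → ℝ} {c : ℝ}
    (h : ∀ S : Finset ι, (∑ i ∈ S, |x i|) / (#S : ℝ) ^ β ≤ c) : subsetSumNorm β x ≤ c :=
  sup'_le _ _ fun S _ => h S

theorem abs_le_subsetSumNorm (β : ℝ) (x : ι → ℝ) (i : ι) : |x i| ≤ subsetSumNorm β x := by
  simpa using le_subsetSumNorm β x {i}

theorem subsetSumNorm_add_le (x y : ι → ℝ) :
    subsetSumNorm β (x + y) ≤ subsetSumNorm β x + subsetSumNorm β y :=
  subsetSumNorm_le fun S => by
    calc (∑ i ∈ S, |(x + y) i|) / (#S : ℝ) ^ β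
        ≤ (∑ i ∈ S, |x i| + ∑ i ∈ S, |y i|) / (#S : ℝ) ^ β := by
          rw [← sum_add_distrib]
          gcongr with i
          exact abs_add_le _ _
      _ ≤ subsetSumNorm β x + subsetSumNorm β y := by
          rw [add_div]
          exact add_le_add (le_subsetSumNorm β x S) (le_subsetSumNorm β y S)

theorem subsetSumNorm_smul (c : ℝ) (x : ι → ℝ) :
    subsetSumNorm β (c • x) = |c| * subsetSumNorm β x := by
  rw [subsetSumNorm, subsetSumNorm, mul₀_sup' (abs_nonneg c)]
  refine sup'_congr _ rfl fun S _ => ?_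
  simp only [Pi.smul_apply, smul_eq_mul, abs_mul, ← mul_sum, mul_div_assoc]

theorem subsetSumNorm_le_of_le {x y : ι → ℝ} (hx : 0 ≤ x) (hxy : x ≤ y) :
    subsetSumNorm β x ≤ subsetSumNorm β y :=
  subsetSumNorm_le fun S => by
    refine le_trans ?_ (le_subsetSumNorm β y S)
    refine div_le_div_of_nonneg_right (sum_le_sum fun i _ => ?_) (by positivity)
    rw [abs_of_nonneg (hx i), abs_of_nonneg ((hx i).trans (hxy i))]
    exact hxy i

theorem subsetSumNorm_comp_perm (σ : Equiv.Perm ι) (x : ι → ℝ) :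
    subsetSumNorm β (x ∘ σ) = subsetSumNorm β x := by
  have key : ∀ (τ : Equiv.Perm ι) (y : ι → ℝ), subsetSumNorm β (y ∘ τ) ≤ subsetSumNorm β y :=
    fun τ y => subsetSumNorm_le fun S => by
      simpa using le_subsetSumNorm β y (S.map τ.toEmbedding)
  refine le_antisymm (key σ x) ?_
  simpa [Function.comp_def] using key σ⁻¹ (x ∘ σ)

theorem isMonotoneNorm_subsetSumNorm {n : ℕ} : IsMonotoneNorm (subsetSumNorm (ι := Fin n) β) :=
  ⟨subsetSumNorm_add_le, subsetSumNorm_smul,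
    fun x hx => funext fun i => abs_nonpos_iff.1 (hx ▸ abs_le_subsetSumNorm β x i),
    fun _ _ hx hxy => subsetSumNorm_le_of_le hx hxy⟩

theorem isSymmetricNorm_subsetSumNorm {n : ℕ} : IsSymmetricNorm (subsetSumNorm (ι := Fin n) β) :=
  subsetSumNorm_comp_perm

theorem card_rpow_le_subsetSumNorm_indicator [DecidableEq ι] (hβ : β ≠ 1) (s : Finset ι) :
    (#s : ℝ) ^ (1 - β) ≤ subsetSumNorm β (fun i => if i ∈ s then 1 else 0) := by
  have h := le_subsetSumNorm β (fun i => if i ∈ s then (1 : ℝ) else 0) s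
  have hsum : ∑ i ∈ s, |if i ∈ s then (1 : ℝ) else 0| = #s := by
    rw [sum_congr rfl fun i hi => by rw [if_pos hi, abs_one]]
    simp
  rwa [hsum, ← Real.rpow_one_sub' (Nat.cast_nonneg _) (sub_ne_zero.2 hβ.symm)] at h

theorem subsetSumNorm_rpow_sub_one_le (hβ0 : 0 < β) (hβ1 : β ≤ 1) (n : ℕ) :
    subsetSumNorm β (fun i : Fin n => ((i : ℕ) + 1 : ℝ) ^ (β - 1)) ≤ β⁻¹ :=
  subsetSumNorm_le fun S => by
    refine div_le_of_le_mul₀ (by positivity) (by positivity) ?_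
    calc ∑ i ∈ S, |((i : ℕ) + 1 : ℝ) ^ (β - 1)|
        = ∑ j ∈ S.map Fin.valEmbedding, ((j : ℝ) + 1) ^ (β - 1) := by
          rw [sum_map]
          exact sum_congr rfl fun i _ => abs_of_nonneg (by positivity)
      _ ≤ ∑ j ∈ range #S, ((j : ℝ) + 1) ^ (β - 1) := by
          have hanti : Antitone fun j : ℕ => ((j : ℝ) + 1) ^ (β - 1) := fun a b hab =>
            Real.rpow_le_rpow_of_nonpos (by positivity) (by gcongr) (by linarith)
          simpa using sum_le_sum_range_card_of_antitone hanti (S.map Fin.valEmbedding)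
      _ ≤ β⁻¹ * (#S : ℝ) ^ β := by
          rw [inv_mul_eq_div]
          exact sum_range_rpow_sub_one_le hβ0 hβ1 _

end SubsetSumNorm

section OrliczNorm

variable {n : ℕ} {G : ℝ → ℝ}

theorem orliczNorm_le {x : Fin n → ℝ} {α : ℝ} (hα : 0 < α) (h : ∑ i, G (x i / α) ≤ 1) :
    orliczNorm G x ≤ α :=
  csInf_le ⟨0, fun _ h => h.1.le⟩ ⟨hα, h⟩

/-- `hpos` excludes the empty infimum, whose junk value is `0`. -/
theorem sum_le_one_of_orliczNorm_lt (hG : MonotoneOn G (Set.Ici 0)) {x : Fin n → ℝ} (hx : 0 ≤ x)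
    (hpos : 0 < orliczNorm G x) {α : ℝ} (hlt : orliczNorm G x < α) : ∑ i, G (x i / α) ≤ 1 := by
  have hne : {α : ℝ | 0 < α ∧ ∑ i, G (x i / α) ≤ 1}.Nonempty := by
    by_contra h
    simp [orliczNorm, Set.not_nonempty_iff_eq_empty.1 h] at hpos
  obtain ⟨α₀, ⟨hα₀, hsum⟩, hα₀α⟩ := (csInf_lt_iff ⟨0, fun _ h => h.1.le⟩ hne).1 hlt
  refine le_trans (sum_le_sum fun i _ => hG ?_ ?_ ?_) hsum
  · exact div_nonneg (hx i) (hα₀.trans hα₀α).le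
  · exact div_nonneg (hx i) hα₀.le
  · exact div_le_div_of_nonneg_left (hx i) hα₀ hα₀α.le

theorem orliczNorm_indicator_le (hG0 : G 0 = 0) (s : Finset (Fin n)) {t : ℝ} (ht : 0 < t)
    (h : #s * G t ≤ 1) : orliczNorm G (fun i => if i ∈ s then 1 else 0) ≤ t⁻¹ := by
  refine orliczNorm_le (inv_pos.2 ht) ?_
  calc ∑ i, G ((if i ∈ s then 1 else 0) / t⁻¹) = ∑ i ∈ s, G t := by
        rw [← sum_subset (subset_univ s) fun i _ hi => by simp [hi, hG0]]
        exact sum_congr rfl fun i hi => by simp [hi]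
    _ ≤ 1 := by simpa using h

end OrliczNorm

section LowerBound

variable {n : ℕ} {β : ℝ} {G : ℝ → ℝ}

theorem inv_lt_of_subsetSumNorm_le_orliczNorm (hβ : β < 1) (hG0 : G 0 = 0)
    (hN : ∀ x : Fin n → ℝ, 0 ≤ x → subsetSumNorm β x ≤ orliczNorm G x)
    {k : ℕ} (hk : 0 < k) (hkn : k ≤ n) {t : ℝ} (ht : (k : ℝ) ^ (β - 1) < t) :
    (k : ℝ)⁻¹ < G t := by
  obtain ⟨s, -, hs⟩ := exists_subset_card_eq (s := (univ : Finset (Fin n))) (by simpa using hkn)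
  have hk0 : (0 : ℝ) < k := by exact_mod_cast hk
  have ht0 : 0 < t := (Real.rpow_pos_of_pos hk0 _).trans ht
  by_contra! hGt
  have hind : orliczNorm G (fun i => if i ∈ s then 1 else 0) ≤ t⁻¹ := by
    refine orliczNorm_indicator_le hG0 s ht0 ?_
    rw [hs, ← mul_inv_cancel₀ hk0.ne']
    exact mul_le_mul_of_nonneg_left hGt hk0.le
  have hlt : t⁻¹ < (k : ℝ) ^ (1 - β) := by
    rw [← neg_sub, Real.rpow_neg hk0.le]
    exact inv_strictAnti₀ (Real.rpow_pos_of_pos hk0 _) ht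
  have hnorm := (card_rpow_le_subsetSumNorm_indicator hβ.ne s).trans
    (hN _ fun i => by split_ifs <;> norm_num)
  rw [hs] at hnorm
  linarith

theorem harmonic_div_le_of_sum_le_one (hβ : β < 1) (hGnn : ∀ t, 0 ≤ t → 0 ≤ G t)
    (hflat : ∀ k : ℕ, 0 < k → k ≤ n → ∀ t, (k : ℝ) ^ (β - 1) < t → (k : ℝ)⁻¹ < G t)
    {A : ℝ} (hA : 0 < A) (hsum : ∑ j ∈ range n, G (((j : ℝ) + 1) ^ (β - 1) / A) ≤ 1)
    {M : ℕ} (hM : A ^ (1 - β)⁻¹ < M) : (harmonic (n / M) : ℝ) ≤ M := by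
  have hM0 : (0 : ℝ) < M := (Real.rpow_pos_of_pos hA _).trans hM
  have hexp : (1 - β)⁻¹ * (β - 1) = -1 := by
    have : 1 - β ≠ 0 := by linarith
    field_simp
    ring
  have hterm : ∀ j < n / M, ((M : ℝ) * (j + 1))⁻¹ < G (((j : ℝ) + 1) ^ (β - 1) / A) := by
    intro j hj
    have hk : M * (j + 1) ≤ n := (Nat.mul_le_mul_left M hj).trans (Nat.mul_div_le n M)
    have hpos : 0 < M * (j + 1) := Nat.mul_pos (by exact_mod_cast hM0) j.succ_pos
    have hlt : ((M * (j + 1) : ℕ) : ℝ) ^ (β - 1) < ((j : ℝ) + 1) ^ (β - 1) / A :=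
      calc ((M * (j + 1) : ℕ) : ℝ) ^ (β - 1) < (A ^ (1 - β)⁻¹ * ((j : ℝ) + 1)) ^ (β - 1) := by
            push_cast
            exact Real.rpow_lt_rpow_of_neg (by positivity) (by gcongr) (by linarith)
        _ = ((j : ℝ) + 1) ^ (β - 1) / A := by
            rw [Real.mul_rpow (by positivity) (by positivity), ← Real.rpow_mul hA.le,
              hexp, Real.rpow_neg_one, inv_mul_eq_div]
    exact_mod_cast hflat _ hpos hk _ hlt
  calc (harmonic (n / M) : ℝ) = M * ∑ j ∈ range (n / M), ((M : ℝ) * (j + 1))⁻¹ := by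
        rw [mul_sum]
        simp only [harmonic]
        push_cast
        exact sum_congr rfl fun j _ => by field_simp
    _ ≤ M * ∑ j ∈ range n, G (((j : ℝ) + 1) ^ (β - 1) / A) := by
        refine mul_le_mul_of_nonneg_left ?_ hM0.le
        refine (sum_le_sum fun j hj => (hterm j (mem_range.1 hj)).le).trans ?_
        exact sum_le_sum_of_subset_of_nonneg (range_mono (Nat.div_le_self n M))
          fun j _ _ => hGnn _ (by positivity)
    _ ≤ M := mul_le_of_le_one_right hM0.le hsum

theorem log_lt_two_mul_of_harmonic_div_le {M : ℕ} (hn : 0 < n) (hM : 0 < M)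
    (h : (harmonic (n / M) : ℝ) ≤ M) : Real.log n < 2 * M := by
  have hM0 : (0 : ℝ) < M := by exact_mod_cast hM
  have hlt : (n : ℝ) < M * ((n / M : ℕ) + 1 : ℝ) := by exact_mod_cast Nat.lt_mul_div_succ n hM
  calc Real.log n < Real.log (M * ((n / M : ℕ) + 1 : ℝ)) :=
        Real.log_lt_log (by exact_mod_cast hn) hlt
    _ = Real.log M + Real.log ((n / M : ℕ) + 1 : ℝ) := Real.log_mul hM0.ne' (by positivity)
    _ ≤ (M - 1) + M := by
        refine add_le_add (Real.log_le_sub_one_of_pos hM0) ?_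
        simpa using (log_add_one_le_harmonic _).trans h
    _ < 2 * M := by linarith

theorem log_lt_of_orliczNorm_approx (hβ0 : 0 < β) (hβ1 : β < 1) (hn : 0 < n)
    (hG : MonotoneOn G (Set.Ici 0)) (hG0 : G 0 = 0) {K : ℝ} (hK : 0 ≤ K)
    (happrox : ∀ x : Fin n → ℝ, 0 ≤ x →
      subsetSumNorm β x ≤ orliczNorm G x ∧ orliczNorm G x ≤ K * subsetSumNorm β x) :
    Real.log n < 2 * ((K / β + 1) ^ (1 - β)⁻¹ + 1) := by
  set z : Fin n → ℝ := fun i => ((i : ℕ) + 1 : ℝ) ^ (β - 1)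
  have hz : 0 ≤ z := fun i => by positivity
  have hz1 : 1 ≤ subsetSumNorm β z := by simpa [z] using abs_le_subsetSumNorm β z ⟨0, hn⟩
  obtain ⟨hlow, hup⟩ := happrox z hz
  have hlt : orliczNorm G z < K / β + 1 :=
    calc orliczNorm G z ≤ K * β⁻¹ :=
          hup.trans (mul_le_mul_of_nonneg_left (subsetSumNorm_rpow_sub_one_le hβ0 hβ1.le n) hK)
      _ < K / β + 1 := by rw [div_eq_mul_inv]; linarith
  have hsum := sum_le_one_of_orliczNorm_lt hG hz (by linarith) hlt
  rw [Fin.sum_univ_eq_sum_range (fun j => G (((j : ℝ) + 1) ^ (β - 1) / (K / β + 1)))] at hsum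
  have hGnn : ∀ t, 0 ≤ t → 0 ≤ G t := fun t ht => hG0 ▸ hG (Set.mem_Ici.2 le_rfl) ht ht
  have hflat : ∀ k : ℕ, 0 < k → k ≤ n → ∀ t, (k : ℝ) ^ (β - 1) < t → (k : ℝ)⁻¹ < G t :=
    fun k hk hkn t ht =>
      inv_lt_of_subsetSumNorm_le_orliczNorm hβ1 hG0 (fun x hx => (happrox x hx).1) hk hkn ht
  have hM := Nat.lt_floor_add_one ((K / β + 1) ^ (1 - β)⁻¹)
  have hlog := log_lt_two_mul_of_harmonic_div_le hn (Nat.succ_pos _)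
    (harmonic_div_le_of_sum_le_one hβ1 hGnn hflat (by positivity) hsum (by exact_mod_cast hM))
  have hfloor := Nat.floor_le (Real.rpow_nonneg (by positivity : 0 ≤ K / β + 1) (1 - β)⁻¹)
  push_cast at hlog
  linarith

end LowerBound

theorem eventually_two_mul_rpow_add_one_rpow_lt {a r p : ℝ} (ha : 0 ≤ a) (hr : 0 ≤ r) (hp : 0 ≤ p)
    (hrp : r * p < 1) : ∀ᶠ u : ℝ in atTop, 2 * ((a * u ^ r + 1) ^ p + 1) < u := by
  filter_upwards [eventually_ge_atTop 1, (tendsto_rpow_atTop (by linarith : 0 < 1 - r * p))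
    |>.eventually_gt_atTop (2 * ((a + 1) ^ p + 1))] with u hu hc
  have hu0 : 0 < u := by linarith
  have hur : 1 ≤ u ^ r := Real.one_le_rpow hu hr
  have hurp : 1 ≤ u ^ (r * p) := Real.one_le_rpow hu (by positivity)
  have hap : 0 ≤ (a + 1) ^ p := by positivity
  calc 2 * ((a * u ^ r + 1) ^ p + 1) ≤ 2 * (((a + 1) * u ^ r) ^ p + 1) := by gcongr; nlinarith
    _ = 2 * ((a + 1) ^ p * u ^ (r * p) + 1) := by
        rw [Real.mul_rpow (by positivity) (by positivity), ← Real.rpow_mul hu0.le]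
    _ ≤ 2 * ((a + 1) ^ p + 1) * u ^ (r * p) := by nlinarith
    _ < u ^ (1 - r * p) * u ^ (r * p) := by gcongr
    _ = u := by rw [← Real.rpow_add hu0, sub_add_cancel, Real.rpow_one]

/-- There exist monotone symmetric norms that cannot be `C·(log₂ n)^{1−ε}`-approximated by
any Orlicz norm. -/
theorem symmetricNorm_not_orlicz_approx :
    ∀ ε : ℝ, 0 < ε → ε < 1 → ∀ C : ℝ, 0 < C →
      ∃ n : ℕ, 2 ≤ n ∧
        ∃ N : (Fin n → ℝ) → ℝ, IsMonotoneNorm N ∧ IsSymmetricNorm N ∧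
          ¬ ∃ G : ℝ → ℝ, IsOrliczFunction G ∧
            ∀ x : Fin n → ℝ, 0 ≤ x →
              N x ≤ orliczNorm G x ∧
              orliczNorm G x ≤ C * Real.logb 2 n ^ ((1 : ℝ) - ε) * N x := by
  intro ε hε0 hε1 C hC
  have hrp : (1 - ε) * (1 - ε / 2)⁻¹ < 1 := by
    rw [← div_eq_mul_inv, div_lt_one (by linarith)]
    linarith
  set a := C / (ε / 2) / Real.log 2 ^ (1 - ε)
  obtain ⟨n, hlarge, hn⟩ := ((Real.tendsto_log_atTop.comp tendsto_natCast_atTop_atTop).eventually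
    (eventually_two_mul_rpow_add_one_rpow_lt (a := a) (by positivity) (by linarith)
      (inv_nonneg.2 (by linarith)) hrp) |>.and (eventually_ge_atTop 2)).exists
  refine ⟨n, hn, subsetSumNorm (ε / 2), isMonotoneNorm_subsetSumNorm,
    isSymmetricNorm_subsetSumNorm, ?_⟩
  rintro ⟨G, ⟨-, -, hG, hG0, -⟩, happrox⟩
  have hn1 : (1 : ℝ) ≤ n := by exact_mod_cast (by omega : 1 ≤ n)
  have hK : C * Real.logb 2 n ^ (1 - ε) / (ε / 2) = a * Real.log n ^ (1 - ε) := by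
    rw [Real.logb, Real.div_rpow (Real.log_nonneg hn1) (Real.log_nonneg one_le_two)]
    ring
  have hbound := log_lt_of_orliczNorm_approx (by linarith) (by linarith) (by omega) hG hG0
    (mul_nonneg hC.le (Real.rpow_nonneg (Real.logb_nonneg one_lt_two hn1) _)) happrox
  rw [hK] at hbound
  exact lt_asymm hbound hlarge
end
end

section
/- Let p ≥ 1, ε > 0, and let N be a monotone norm on ℝⁿ that is differentiable at every point of the nonnegative orthant except the origin and is p-supermodular. Then for all x, y ∈ ℝⁿ with nonnegative coordinates such that N(x) > (p−1)/ε and x ≠ 0, the gradients satisfy coordinatewise: ∂_i N(x+y) ≥ exp(−ε·N(y))·∂_i N(x) for every i ∈ {1,…,n}. -/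
/-!
Supermodularity says that `z ↦ N(z+y)^p - N(z)^p` attains its minimum over `x + ℝⁿ₊` at `x`, so
its derivative at `x` in the direction `eᵢ` is nonnegative:
`N(x)^{p-1} ∂ᵢN(x) ≤ N(x+y)^{p-1} ∂ᵢN(x+y)`. The weights compare by subadditivity and
`1 + s ≤ exp s`: `N(x+y)^{p-1} ≤ N(x)^{p-1} (1 + N y / N x)^{p-1} ≤ N(x)^{p-1} exp(ε N y)`, the last
step because `p - 1 < ε N x`. As `∂ᵢN(x) ≥ 0` by monotonicity, the claim follows.
-/

noncomputable section

/-- `N` is `p`-supermodular: `N(u+v+w)^p − N(u+v)^p ≥ N(u+w)^p − N(u)^p` for all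
nonnegative `u, v, w`. -/
def IsPSupermodular {n : ℕ} (N : (Fin n → ℝ) → ℝ) (p : ℝ) : Prop :=
  ∀ u v w : Fin n → ℝ, 0 ≤ u → 0 ≤ v → 0 ≤ w →
    N (u + w) ^ p - N u ^ p ≤ N (u + v + w) ^ p - N (u + v) ^ p

open Real Set

lemma HasFDerivAt.nonneg_of_isMinOn_Ici {E : Type*} [NormedAddCommGroup E] [NormedSpace ℝ E]
    [PartialOrder E] [IsOrderedAddMonoid E] [PosSMulMono ℝ E]
    {f : E → ℝ} {f' : E →L[ℝ] ℝ} {x e : E}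
    (hf : HasFDerivAt f f' x) (hmin : IsMinOn f (Ici x) x) (he : 0 ≤ e) : 0 ≤ f' e := by
  refine hmin.localize.hasFDerivWithinAt_nonneg hf.hasFDerivWithinAt
    (mem_posTangentConeAt_of_frequently_mem (Filter.Eventually.frequently ?_))
  filter_upwards [self_mem_nhdsWithin] with t (ht : 0 < t)
  exact le_add_of_nonneg_right (smul_nonneg ht.le he)

lemma add_rpow_le_exp_mul_rpow {a c q ε : ℝ} (ha : 0 < a) (hc : 0 ≤ c) (hq : 0 ≤ q)
    (hqa : q ≤ ε * a) : (a + c) ^ q ≤ exp (ε * c) * a ^ q := by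
  have hratio : c / a * q ≤ ε * c := by
    rw [div_mul_eq_mul_div, div_le_iff₀ ha]
    nlinarith
  calc (a + c) ^ q = (1 + c / a) ^ q * a ^ q := by
        rw [← mul_rpow (by positivity) ha.le, add_mul, one_mul, div_mul_cancel₀ _ ha.ne']
    _ ≤ exp (c / a) ^ q * a ^ q := by
        gcongr
        linarith [add_one_le_exp (c / a)]
    _ ≤ exp (ε * c) * a ^ q := by
        rw [← exp_mul]
        gcongr

lemma IsMonotoneNorm.map_zero {n : ℕ} {N : (Fin n → ℝ) → ℝ} (hN : IsMonotoneNorm N) :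
    N 0 = 0 := by
  simpa using hN.2.1 0 0

lemma IsPSupermodular.rpow_mul_fderiv_le {n : ℕ} {N : (Fin n → ℝ) → ℝ} {p : ℝ}
    (hsup : IsPSupermodular N p) (hp : 1 ≤ p) {x y e : Fin n → ℝ}
    (hx : 0 ≤ x) (hy : 0 ≤ y) (he : 0 ≤ e)
    (hNx : DifferentiableAt ℝ N x) (hNxy : DifferentiableAt ℝ N (x + y)) :
    N x ^ (p - 1) * fderiv ℝ N x e ≤ N (x + y) ^ (p - 1) * fderiv ℝ N (x + y) e := by
  set g : (Fin n → ℝ) → ℝ := fun z ↦ N (z + y) ^ p - N z ^ p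
  have hg : HasFDerivAt g ((p * N (x + y) ^ (p - 1)) • fderiv ℝ N (x + y) -
      (p * N x ^ (p - 1)) • fderiv ℝ N x) x :=
    (((hasFDerivAt_comp_add_right y).2 hNxy.hasFDerivAt).rpow_const (Or.inr hp)).sub
      (hNx.hasFDerivAt.rpow_const (Or.inr hp))
  have hmin : IsMinOn g (Ici x) x := by
    intro z (hz : x ≤ z)
    have := hsup x y (z - x) hx hy (sub_nonneg.2 hz)
    rw [add_sub_cancel, show x + y + (z - x) = z + y by abel] at this
    show g x ≤ g z
    linarith
  have := hg.nonneg_of_isMinOn_Ici hmin he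
  simp only [FunLike.coe_sub, FunLike.coe_smul, Pi.sub_apply, Pi.smul_apply,
    smul_eq_mul] at this
  exact le_of_mul_le_mul_left (by linarith) (by linarith : 0 < p)

theorem pSupermodular_gradient_stable_general {n : ℕ} (p ε : ℝ) (hp : 1 ≤ p) (hε : 0 < ε)
    (N : (Fin n → ℝ) → ℝ) (hN : IsMonotoneNorm N)
    (hdiff : ∀ x : Fin n → ℝ, 0 ≤ x → x ≠ 0 → DifferentiableAt ℝ N x)
    (hsup : IsPSupermodular N p)
    (x y : Fin n → ℝ) (hx : 0 ≤ x) (hy : 0 ≤ y)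
    (hbig : (p - 1) / ε < N x) :
    ∀ i : Fin n,
      Real.exp (-(ε * N y)) * fderiv ℝ N x (Pi.single i 1) ≤
        fderiv ℝ N (x + y) (Pi.single i 1) := by
  intro i
  have hN0 := hN.map_zero
  obtain ⟨hsubadd, -, -, hmono⟩ := hN
  have hNx : 0 < N x := (div_nonneg (by linarith) hε.le).trans_lt hbig
  have hNxy : 0 < N (x + y) := hNx.trans_le (hmono x _ hx (le_add_of_nonneg_right hy))
  have hNy : 0 ≤ N y := hN0 ▸ hmono 0 y le_rfl hy
  have hdx := hdiff x hx (ne_of_apply_ne N (hN0 ▸ hNx.ne'))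
  have hdxy := hdiff _ (add_nonneg hx hy) (ne_of_apply_ne N (hN0 ▸ hNxy.ne'))
  have he : (0 : Fin n → ℝ) ≤ Pi.single i 1 := Pi.single_nonneg.2 zero_le_one
  have hgrad := hsup.rpow_mul_fderiv_le hp hx hy he hdx hdxy
  have hDx : 0 ≤ fderiv ℝ N x (Pi.single i 1) :=
    hdx.hasFDerivAt.nonneg_of_isMinOn_Ici (fun z hz ↦ hmono x z hx hz) he
  have hweight : N (x + y) ^ (p - 1) ≤ exp (ε * N y) * N x ^ (p - 1) :=
    (rpow_le_rpow hNxy.le (hsubadd x y) (by linarith)).trans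
      (add_rpow_le_exp_mul_rpow hNx hNy (by linarith) (by linarith [(div_lt_iff₀ hε).1 hbig]))
  refine le_of_mul_le_mul_left ?_ (rpow_pos_of_pos hNxy (p - 1))
  calc N (x + y) ^ (p - 1) * (exp (-(ε * N y)) * fderiv ℝ N x (Pi.single i 1))
      = exp (-(ε * N y)) * N (x + y) ^ (p - 1) * fderiv ℝ N x (Pi.single i 1) := by ring
    _ ≤ exp (-(ε * N y)) * (exp (ε * N y) * N x ^ (p - 1)) * fderiv ℝ N x (Pi.single i 1) := by
        gcongr
    _ = N x ^ (p - 1) * fderiv ℝ N x (Pi.single i 1) := by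
        rw [← mul_assoc, ← exp_add, neg_add_cancel, exp_zero, one_mul]
    _ ≤ N (x + y) ^ (p - 1) * fderiv ℝ N (x + y) (Pi.single i 1) := hgrad

/-- Gradient stability of a differentiable `p`-supermodular norm: if `N x > (p−1)/ε`, then
`∂ᵢN(x+y) ≥ exp(−ε·N(y))·∂ᵢN(x)` for all nonnegative `x, y` and all coordinates `i`. -/
theorem pSupermodular_gradient_stable {n : ℕ} (p ε : ℝ) (hp : 1 ≤ p) (hε : 0 < ε)
    (N : (Fin n → ℝ) → ℝ) (hN : IsMonotoneNorm N)
    (hdiff : ∀ x : Fin n → ℝ, 0 ≤ x → x ≠ 0 → DifferentiableAt ℝ N x)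
    (hsup : IsPSupermodular N p)
    (x y : Fin n → ℝ) (hx : 0 ≤ x) (hy : 0 ≤ y) (hx0 : x ≠ 0)
    (hbig : (p - 1) / ε < N x) :
    ∀ i : Fin n,
      Real.exp (-(ε * N y)) * fderiv ℝ N x (Pi.single i 1) ≤
        fderiv ℝ N (x + y) (Pi.single i 1) :=
  pSupermodular_gradient_stable_general p ε hp hε N hN hdiff hsup x y hx hy hbig
end
end
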